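/- (Lemma on the torsion term, part (iii).) For every λ > 0, every Z ∈ m, and every X that lies either in ι(n) or in p, one has g_λ([Z_n, X_p] − [X_n, Z_p], X) = 0, where for W ∈ m, W = W_n + W_p denotes its decomposition with W_n ∈ ι(n) and W_p ∈ p (note that [Z_n, X_p] and [X_n, Z_p] lie in p ⊆ m, so the expression is defined). -/

import Mathlib

open Matrix

def Pmat : Matrix (Fin 4) (Fin 4) ℝ :=
  !![0, -1, 0, 0; 1, 0, 0, 0; 0, 0, 0, -1; 0, 0, 1, 0]

/-- The stabilizer subalgebra `u = {A ∈ so(4) : AP = PA}`. -/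
def uSub : Submodule ℝ (Matrix (Fin 4) (Fin 4) ℝ) where
  carrier := {A | Aᵀ = -A ∧ A * Pmat = Pmat * A}
  add_mem' := by
    rintro a b ⟨ha1, ha2⟩ ⟨hb1, hb2⟩
    exact ⟨by rw [Matrix.transpose_add, ha1, hb1, neg_add],
      by rw [add_mul, mul_add, ha2, hb2]⟩
  zero_mem' := ⟨by simp, by simp⟩
  smul_mem' := by
    rintro c a ⟨h1, h2⟩
    exact ⟨by rw [Matrix.transpose_smul, h1, smul_neg],
      by rw [Matrix.smul_mul, Matrix.mul_smul, h2]⟩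

/-- The complement `n = {A ∈ so(4) : AP = −PA}`. -/
def nSub : Submodule ℝ (Matrix (Fin 4) (Fin 4) ℝ) where
  carrier := {A | Aᵀ = -A ∧ A * Pmat = -(Pmat * A)}
  add_mem' := by
    rintro a b ⟨ha1, ha2⟩ ⟨hb1, hb2⟩
    exact ⟨by rw [Matrix.transpose_add, ha1, hb1, neg_add],
      by rw [add_mul, mul_add, ha2, hb2, neg_add]⟩
  zero_mem' := ⟨by simp, by simp⟩
  smul_mem' := by
    rintro c a ⟨h1, h2⟩
    exact ⟨by rw [Matrix.transpose_smul, h1, smul_neg],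
      by rw [Matrix.smul_mul, Matrix.mul_smul, h2, smul_neg]⟩

/-- The embedding `ι : M₄(ℝ) → M₅(ℝ)` sending `A` to the block-diagonal matrix with
upper-left block `A` and last row and column zero. -/
noncomputable def ι4 : Matrix (Fin 4) (Fin 4) ℝ →ₗ[ℝ] Matrix (Fin 5) (Fin 5) ℝ where
  toFun A := Matrix.reindexLinearEquiv ℝ ℝ finSumFinEquiv finSumFinEquiv
    (Matrix.fromBlocks A 0 0 (0 : Matrix (Fin 1) (Fin 1) ℝ))
  map_add' A B := by
    rw [← map_add]
    refine congrArg _ ?_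
    rw [Matrix.fromBlocks_add]
    simp
  map_smul' c A := by
    dsimp only [RingHom.id_apply]
    rw [← _root_.map_smul (Matrix.reindexLinearEquiv ℝ ℝ finSumFinEquiv finSumFinEquiv)]
    refine congrArg _ ?_
    rw [Matrix.fromBlocks_smul]
    simp

/-- `so(5)` as a submodule of the 5×5 real matrices. -/
def so5 : Submodule ℝ (Matrix (Fin 5) (Fin 5) ℝ) where
  carrier := {X | Xᵀ = -X}
  add_mem' := by
    intro a b ha hb
    simp only [Set.mem_setOf_eq] at *
    rw [Matrix.transpose_add, ha, hb, neg_add]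
  zero_mem' := by simp
  smul_mem' := by
    intro c a ha
    simp only [Set.mem_setOf_eq] at *
    rw [Matrix.transpose_smul, ha, smul_neg]

attribute [local instance] LieRing.ofAssociativeRing

/-- `so(5)` as a Lie subalgebra of the 5×5 real matrices, with the commutator bracket. -/
def so5Alg : LieSubalgebra ℝ (Matrix (Fin 5) (Fin 5) ℝ) :=
  { so5 with
    lie_mem' := by
      intro x y hx hy
      simp only [so5, Set.mem_setOf_eq] at *
      rw [Ring.lie_def, Matrix.transpose_sub, Matrix.transpose_mul, Matrix.transpose_mul,
        hx, hy]
      noncomm_ring }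

/-- The Cartan complement `p = {X ∈ so(5) : X_{ij} = 0 for i,j ≤ 4}`. -/
def pSub : Submodule ℝ (Matrix (Fin 5) (Fin 5) ℝ) where
  carrier := {X | Xᵀ = -X ∧ ∀ i j : Fin 5, (i : ℕ) < 4 → (j : ℕ) < 4 → X i j = 0}
  add_mem' := by
    rintro a b ⟨ha1, ha2⟩ ⟨hb1, hb2⟩
    refine ⟨by rw [Matrix.transpose_add, ha1, hb1, neg_add], fun i j hi hj => ?_⟩
    simp [Matrix.add_apply, ha2 i j hi hj, hb2 i j hi hj]
  zero_mem' := ⟨by simp, fun i j _ _ => rfl⟩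
  smul_mem' := by
    rintro c a ⟨h1, h2⟩
    refine ⟨by rw [Matrix.transpose_smul, h1, smul_neg], fun i j hi hj => ?_⟩
    simp [Matrix.smul_apply, h2 i j hi hj]

/-- `m = ι(n) ⊕ p` inside `so(5)`. -/
noncomputable def mSub : Submodule ℝ (Matrix (Fin 5) (Fin 5) ℝ) :=
  nSub.map ι4 ⊔ pSub
/-- Symmetrization map into `so(5)`; it is the identity on skew-symmetric matrices. -/
noncomputable def toSo5 (X : Matrix (Fin 5) (Fin 5) ℝ) : so5Alg :=
  ⟨(1 / 2 : ℝ) • (X - Xᵀ), by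
    show ((1 / 2 : ℝ) • (X - Xᵀ))ᵀ = -((1 / 2 : ℝ) • (X - Xᵀ))
    rw [Matrix.transpose_smul, Matrix.transpose_sub, Matrix.transpose_transpose,
      ← neg_sub X Xᵀ, smul_neg]⟩

/-- The Killing form `κ(X,Y) = tr(ad X ∘ ad Y)` of the Lie algebra `so(5)`, as a function
of (skew-symmetric) 5×5 matrices. -/
noncomputable def kil (X Y : Matrix (Fin 5) (Fin 5) ℝ) : ℝ :=
  killingForm ℝ ↥so5Alg (toSo5 X) (toSo5 Y)

/-- The upper-left 4×4 block of a 5×5 matrix. -/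
def blk (X : Matrix (Fin 5) (Fin 5) ℝ) : Matrix (Fin 4) (Fin 4) ℝ :=
  Matrix.of fun i j => X i.castSucc j.castSucc

/-- The `ι(n)`-component of `X ∈ so(5)`, using the projection `A ↦ (A + PAP)/2` of
`so(4)` onto `n`. -/
noncomputable def nPart (X : Matrix (Fin 5) (Fin 5) ℝ) : Matrix (Fin 5) (Fin 5) ℝ :=
  ι4 ((1 / 2 : ℝ) • (blk X + Pmat * blk X * Pmat))

/-- The `p`-component of `X ∈ so(5)`. -/
noncomputable def pPart (X : Matrix (Fin 5) (Fin 5) ℝ) : Matrix (Fin 5) (Fin 5) ℝ :=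
  X - ι4 (blk X)

/-- The projection `π_m : so(5) → m` along `ι(u)`. -/
noncomputable def mPart (X : Matrix (Fin 5) (Fin 5) ℝ) : Matrix (Fin 5) (Fin 5) ℝ :=
  nPart X + pPart X

/-- The metric `g_λ(X,Y) = −(1/λ²)·κ(X_n,Y_n) − κ(X_p,Y_p)` on `m`. -/
noncomputable def gl (lam : ℝ) (X Y : Matrix (Fin 5) (Fin 5) ℝ) : ℝ :=
  -(1 / lam ^ 2) * kil (nPart X) (nPart Y) - kil (pPart X) (pPart Y)

/-! The bracket `E = [Z_n, X_p] − [X_n, Z_p]` pairs a block-diagonal matrix with one whose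
upper-left block vanishes, so `E` itself has vanishing upper-left block: `E_n = 0` and
`E_p = E`, and `g_λ(E, X) = −κ(E, X_p)`. For `X ∈ ι(n)` this vanishes because `X_p = 0`;
for `X ∈ p` we have `E = [Z_n, X]`, and `κ([Z_n, X], X) = κ(Z_n, [X, X]) = 0` by
invariance of the Killing form. -/

lemma ι4_apply_castSucc (A : Matrix (Fin 4) (Fin 4) ℝ) (i j : Fin 4) :
    ι4 A i.castSucc j.castSucc = A i j := by
  simp [ι4, Matrix.coe_reindexLinearEquiv]

lemma ι4_apply_last_right (A : Matrix (Fin 4) (Fin 4) ℝ) (i : Fin 5) :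
    ι4 A i (Fin.last 4) = 0 := by
  simp only [ι4, LinearMap.coe_mk, AddHom.coe_mk, Matrix.coe_reindexLinearEquiv,
    Matrix.reindex_apply, Matrix.submatrix_apply, finSumFinEquiv_symm_last]
  rcases (finSumFinEquiv.symm i : Fin 4 ⊕ Fin 1) with k | k <;> simp

lemma ι4_apply_last_left (A : Matrix (Fin 4) (Fin 4) ℝ) (j : Fin 5) :
    ι4 A (Fin.last 4) j = 0 := by
  simp only [ι4, LinearMap.coe_mk, AddHom.coe_mk, Matrix.coe_reindexLinearEquiv,
    Matrix.reindex_apply, Matrix.submatrix_apply, finSumFinEquiv_symm_last]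
  rcases (finSumFinEquiv.symm j : Fin 4 ⊕ Fin 1) with k | k <;> simp

lemma blk_ι4 (A : Matrix (Fin 4) (Fin 4) ℝ) : blk (ι4 A) = A := by
  ext i j
  exact ι4_apply_castSucc A i j

lemma blk_sub (X Y : Matrix (Fin 5) (Fin 5) ℝ) : blk (X - Y) = blk X - blk Y := rfl

lemma blk_ι4_mul (A : Matrix (Fin 4) (Fin 4) ℝ) (B : Matrix (Fin 5) (Fin 5) ℝ) :
    blk (ι4 A * B) = A * blk B := by
  ext i j
  simp only [blk, Matrix.of_apply, Matrix.mul_apply, Fin.sum_univ_castSucc,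
    ι4_apply_castSucc, ι4_apply_last_right, zero_mul, add_zero]

lemma blk_mul_ι4 (A : Matrix (Fin 4) (Fin 4) ℝ) (B : Matrix (Fin 5) (Fin 5) ℝ) :
    blk (B * ι4 A) = blk B * A := by
  ext i j
  simp only [blk, Matrix.of_apply, Matrix.mul_apply, Fin.sum_univ_castSucc,
    ι4_apply_castSucc, ι4_apply_last_left, mul_zero, add_zero]

lemma blk_pPart (X : Matrix (Fin 5) (Fin 5) ℝ) : blk (pPart X) = 0 := by
  rw [pPart, blk_sub, blk_ι4, sub_self]

lemma blk_eq_zero_of_mem_pSub {X : Matrix (Fin 5) (Fin 5) ℝ} (hX : X ∈ pSub) : blk X = 0 := by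
  ext i j
  exact hX.2 i.castSucc j.castSucc i.isLt j.isLt

lemma pPart_ι4 (A : Matrix (Fin 4) (Fin 4) ℝ) : pPart (ι4 A) = 0 := by
  rw [pPart, blk_ι4, sub_self]

lemma nPart_of_blk_eq_zero {X : Matrix (Fin 5) (Fin 5) ℝ} (h : blk X = 0) : nPart X = 0 := by
  simp [nPart, h]

lemma pPart_of_blk_eq_zero {X : Matrix (Fin 5) (Fin 5) ℝ} (h : blk X = 0) : pPart X = X := by
  simp [pPart, h]

lemma blk_torsion_eq_zero (Z X : Matrix (Fin 5) (Fin 5) ℝ) :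
    blk ((nPart Z * pPart X - pPart X * nPart Z) -
      (nPart X * pPart Z - pPart Z * nPart X)) = 0 := by
  simp only [nPart, blk_sub, blk_ι4_mul, blk_mul_ι4, blk_pPart, mul_zero, zero_mul, sub_self]

lemma gl_of_blk_eq_zero (lam : ℝ) {E : Matrix (Fin 5) (Fin 5) ℝ} (hE : blk E = 0)
    (X : Matrix (Fin 5) (Fin 5) ℝ) : gl lam E X = -kil E (pPart X) := by
  have hE0 : toSo5 (nPart E) = 0 := by
    ext1
    simp [toSo5, nPart_of_blk_eq_zero hE]
  rw [gl, kil, hE0, pPart_of_blk_eq_zero hE, LinearMap.map_zero₂]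
  ring

lemma kil_zero_right (X : Matrix (Fin 5) (Fin 5) ℝ) : kil X 0 = 0 := by
  have h0 : toSo5 (0 : Matrix (Fin 5) (Fin 5) ℝ) = 0 := by
    ext1
    simp [toSo5]
  rw [kil, h0, map_zero]

lemma toSo5_of_skew {X : Matrix (Fin 5) (Fin 5) ℝ} (hX : Xᵀ = -X) :
    toSo5 X = ⟨X, hX⟩ := by
  ext1
  change (1 / 2 : ℝ) • (X - Xᵀ) = X
  rw [hX, sub_neg_eq_add, ← two_smul ℝ X, smul_smul]
  norm_num

lemma toSo5_commutator (A : Matrix (Fin 5) (Fin 5) ℝ) {X : Matrix (Fin 5) (Fin 5) ℝ}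
    (hX : Xᵀ = -X) : toSo5 (A * X - X * A) = ⁅toSo5 A, toSo5 X⁆ := by
  rw [toSo5_of_skew hX]
  ext1
  change (1 / 2 : ℝ) • (A * X - X * A - (A * X - X * A)ᵀ) =
    (1 / 2 : ℝ) • (A - Aᵀ) * X - X * (1 / 2 : ℝ) • (A - Aᵀ)
  rw [Matrix.transpose_sub, Matrix.transpose_mul, Matrix.transpose_mul, hX,
    Matrix.smul_mul, Matrix.mul_smul, ← smul_sub]
  congr 1
  noncomm_ring

lemma kil_commutator_self (A : Matrix (Fin 5) (Fin 5) ℝ) {X : Matrix (Fin 5) (Fin 5) ℝ}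
    (hX : Xᵀ = -X) : kil (A * X - X * A) X = 0 := by
  rw [kil, toSo5_commutator A hX, LieModule.traceForm_apply_lie_apply, lie_self, map_zero]

theorem torsion_term_part_iii_general (lam : ℝ)
    (Z X : Matrix (Fin 5) (Fin 5) ℝ)
    (hX : X ∈ nSub.map ι4 ∨ X ∈ pSub) :
    gl lam ((nPart Z * pPart X - pPart X * nPart Z) -
      (nPart X * pPart Z - pPart Z * nPart X)) X = 0 := by
  rw [gl_of_blk_eq_zero lam (blk_torsion_eq_zero Z X), neg_eq_zero]
  rcases hX with ⟨A, -, rfl⟩ | hX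
  · rw [pPart_ι4, kil_zero_right]
  · have hbX := blk_eq_zero_of_mem_pSub hX
    rw [nPart_of_blk_eq_zero hbX, pPart_of_blk_eq_zero hbX, zero_mul, mul_zero, sub_self,
      sub_zero]
    exact kil_commutator_self _ hX.1

/-- Lemma on the torsion term, part (iii): for `λ > 0`, `Z ∈ m` and `X ∈ ι(n)` or
`X ∈ p`, one has `g_λ([Z_n, X_p] − [X_n, Z_p], X) = 0`, where `W = W_n + W_p` is the
decomposition of `W ∈ m` with `W_n ∈ ι(n)` and `W_p ∈ p`. -/
theorem torsion_term_part_iii (lam : ℝ) (hlam : 0 < lam)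
    (Z X : Matrix (Fin 5) (Fin 5) ℝ) (hZ : Z ∈ mSub)
    (hX : X ∈ nSub.map ι4 ∨ X ∈ pSub) :
    gl lam ((nPart Z * pPart X - pPart X * nPart Z) -
      (nPart X * pPart Z - pPart Z * nPart X)) X = 0 :=
  torsion_term_part_iii_general lam Z X hX
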